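/- Define f : (0,1) → ℝ by f(x) = (1/2)(1 − x + √(1 + 2x − 3x²)). Then f is differentiable on (0,1) with f'(x) = (1/2)(−1 + (1 − 3x)/√(1 + 2x − 3x²)); moreover, for every x ∈ (0,1) with x ≠ 2/3, f'(x) = [f(x)(1 − f(x))(3x − 2)] / [x(1 − x)(3f(x) − 2)]. In particular, the vector field ẋ = x(1−x)(3y−2), ẏ = y(1−y)(3x−2) is everywhere tangent to the curve y = f(x). -/

import Mathlib

open Set

/-- The curve bounding the region of attraction of (Hare,Hare) in the
Stag Hunt game. -/
noncomputable def stagHuntCurve (x : ℝ) : ℝ :=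
  (1/2) * (1 - x + Real.sqrt (1 + 2 * x - 3 * x ^ 2))

/-!
The graph of `stagHuntCurve` lies on the conic `x² + xy + y² - x - y = 0` (solve the quadratic
in `y`), and this conic is invariant under the replicator field `V`: the derivative of the
conic's equation along `V` is `-2 (3xy - 2x - 2y + 1)` times the equation itself. So along the
curve both `V` and the tangent `(1, f')` (by implicit differentiation) are orthogonal to the
gradient of the conic, which does not vanish there because its `y`-component is
`√(1 + 2x - 3x²) > 0`. Hence `V` is parallel to `(1, f')`.
-/

def stagHuntConic (x y : ℝ) : ℝ :=
  x ^ 2 + x * y + y ^ 2 - x - y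

lemma grad_stagHuntConic_dot_replicator (x y : ℝ) :
    (2 * x + y - 1) * (x * (1 - x) * (3 * y - 2)) + (x + 2 * y - 1) * (y * (1 - y) * (3 * x - 2))
      = -2 * (3 * x * y - 2 * x - 2 * y + 1) * stagHuntConic x y := by
  unfold stagHuntConic
  ring

lemma replicator_tangent_of_stagHuntConic_eq_zero {x y d : ℝ} (hC : stagHuntConic x y = 0)
    (hy : x + 2 * y - 1 ≠ 0) (hd : (2 * x + y - 1) + d * (x + 2 * y - 1) = 0) :
    y * (1 - y) * (3 * x - 2) = d * (x * (1 - x) * (3 * y - 2)) := by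
  apply mul_left_cancel₀ hy
  linear_combination grad_stagHuntConic_dot_replicator x y - (x * (1 - x) * (3 * y - 2)) * hd
    - 2 * (3 * x * y - 2 * x - 2 * y + 1) * hC

lemma eq_two_thirds_of_stagHuntConic_eq_zero {x : ℝ} (hx : 0 ≤ x)
    (hC : stagHuntConic x (2 / 3) = 0) : x = 2 / 3 := by
  unfold stagHuntConic at hC
  have : (x - 2 / 3) * (x + 1 / 3) = 0 := by linear_combination hC
  rcases mul_eq_zero.1 this with h | h <;> linarith

section Curve

variable {x : ℝ}

lemma stagHuntConic_stagHuntCurve (hq : 0 ≤ 1 + 2 * x - 3 * x ^ 2) :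
    stagHuntConic x (stagHuntCurve x) = 0 := by
  unfold stagHuntConic stagHuntCurve
  linear_combination (1 / 4 : ℝ) * Real.sq_sqrt hq

lemma add_two_mul_stagHuntCurve_sub_one :
    x + 2 * stagHuntCurve x - 1 = Real.sqrt (1 + 2 * x - 3 * x ^ 2) := by
  unfold stagHuntCurve
  ring

lemma hasDerivAt_stagHuntCurve (hq : 0 < 1 + 2 * x - 3 * x ^ 2) :
    HasDerivAt stagHuntCurve ((1/2) * (-1 + (1 - 3*x) / Real.sqrt (1 + 2*x - 3*x^2))) x := by
  have hpoly : HasDerivAt (fun t : ℝ => 1 + 2 * t - 3 * t ^ 2) (2 - 6 * x) x := by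
    refine ((((hasDerivAt_id x).const_mul 2).const_add 1).sub
      ((hasDerivAt_pow 2 x).const_mul 3)).congr_deriv ?_
    ring
  refine ((((hasDerivAt_id x).const_sub 1).add (hpoly.sqrt hq.ne')).const_mul
    (1/2 : ℝ)).congr_deriv ?_
  field_simp
  ring

lemma stagHuntCurve_implicit_deriv (hq : 0 < 1 + 2 * x - 3 * x ^ 2) :
    (2 * x + stagHuntCurve x - 1)
      + (1/2) * (-1 + (1 - 3*x) / Real.sqrt (1 + 2*x - 3*x^2)) * (x + 2 * stagHuntCurve x - 1)
      = 0 := by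
  have hs : Real.sqrt (1 + 2 * x - 3 * x ^ 2) ≠ 0 := (Real.sqrt_pos.2 hq).ne'
  rw [add_two_mul_stagHuntCurve_sub_one, stagHuntCurve]
  generalize Real.sqrt (1 + 2 * x - 3 * x ^ 2) = s at hs ⊢
  field_simp
  ring

end Curve

/-- **Tangency of the replicator vector field to the stable manifold.**
The function `f(x) = (1/2)(1 - x + √(1 + 2x - 3x²))` is differentiable on `(0,1)`
with `f'(x) = (1/2)(-1 + (1-3x)/√(1 + 2x - 3x²))`; moreover for `x ≠ 2/3` its
derivative equals `f(x)(1-f(x))(3x-2) / (x(1-x)(3f(x)-2))`, i.e. the replicator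
vector field `ẋ = x(1-x)(3y-2)`, `ẏ = y(1-y)(3x-2)` is everywhere tangent to the
curve `y = f(x)`. -/
theorem stagHuntCurve_tangent :
    (∀ x ∈ Ioo (0:ℝ) 1,
      HasDerivAt stagHuntCurve
        ((1/2) * (-1 + (1 - 3*x) / Real.sqrt (1 + 2*x - 3*x^2))) x) ∧
    (∀ x ∈ Ioo (0:ℝ) 1, x ≠ 2/3 →
      HasDerivAt stagHuntCurve
        ((stagHuntCurve x * (1 - stagHuntCurve x) * (3*x - 2)) /
          (x * (1 - x) * (3 * stagHuntCurve x - 2))) x) := by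
  have hq : ∀ x ∈ Ioo (0:ℝ) 1, 0 < 1 + 2 * x - 3 * x ^ 2 := fun x ⟨h0, h1⟩ => by nlinarith
  refine ⟨fun x hx => hasDerivAt_stagHuntCurve (hq x hx), fun x hx hx23 => ?_⟩
  have hC := stagHuntConic_stagHuntCurve (hq x hx).le
  have hVx : x * (1 - x) * (3 * stagHuntCurve x - 2) ≠ 0 := by
    refine mul_ne_zero (mul_ne_zero hx.1.ne' (sub_ne_zero.2 hx.2.ne')) fun h => hx23 ?_
    rw [show stagHuntCurve x = 2 / 3 by linarith] at hC
    exact eq_two_thirds_of_stagHuntConic_eq_zero hx.1.le hC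
  have hFy : x + 2 * stagHuntCurve x - 1 ≠ 0 := by
    rw [add_two_mul_stagHuntCurve_sub_one]
    exact (Real.sqrt_pos.2 (hq x hx)).ne'
  have hV := replicator_tangent_of_stagHuntConic_eq_zero hC hFy
    (stagHuntCurve_implicit_deriv (hq x hx))
  rw [(div_eq_iff hVx).2 hV]
  exact hasDerivAt_stagHuntCurve (hq x hx)
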